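/- arXiv:1106.2167 — 3 statements merged into one kernel-verified Lean document; each statement's English description precedes it below -/
import Mathlib

section
/- Let (z_n)_{n≥1} be a real sequence with z_1 ≥ 0 satisfying z_{n+1} = z_n − 2z_n/(n+3) + ε'_{n+1}/(n+3) + s'_{n+1}/(n+3) + t_{n+1}, where (ε'_n) are increments of a martingale bounded by 2 in absolute value (with respect to some filtration), s'_n ≥ 0 with s'_n → 0, and ∑|t_n| < ∞ with t_n = O(n^{-2}). Then z_n → 0 almost surely. -/
open MeasureTheory Filter Finset Asymptotics
open scoped NNReal ENNReal

private lemma det_lemma (z e s t : ℕ → ℝ) (C L : ℝ)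
    (hP : Tendsto (fun m => ∑ j ∈ Finset.range m, e (j+2) / ((j:ℝ)+4)) atTop (nhds L))
    (hs : Tendsto s atTop (nhds 0))
    (ht : ∀ n, |t n| ≤ C / ((n:ℝ)+3)^2)
    (hrec : ∀ n ≥ 1, z (n+1) = z n - 2 * z n / ((n:ℝ)+3)
      + e (n+1) / ((n:ℝ)+3) + s (n+1) / ((n:ℝ)+3) + t (n+1)) :
    Tendsto z atTop (nhds 0) := by
  set P : ℕ → ℝ := fun m => ∑ j ∈ Finset.range m, e (j+2) / ((j:ℝ)+4) with hPdef
  -- closed form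
  have key : ∀ m : ℕ, ((m:ℝ)+2) * ((m:ℝ)+3) * z (m+1)
      = 6 * z 1 + ∑ j ∈ Finset.range m,
        (((j:ℝ)+3) * (e (j+2) + s (j+2)) + ((j:ℝ)+3) * ((j:ℝ)+4) * t (j+2)) := by
    intro m
    induction m with
    | zero => norm_num
    | succ m ih =>
      have h4 : ((m:ℝ)+4) ≠ 0 := by positivity
      have hr := hrec (m+1) (by omega)
      rw [Finset.sum_range_succ, ← add_assoc, ← ih, hr]
      push_cast
      field_simp
      ring
  -- Abel summation identity for the martingale part
  have abel : ∀ m : ℕ, (∑ j ∈ Finset.range m, ((j:ℝ)+3) * e (j+2))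
      = ((m:ℝ)+3) * ((m:ℝ)+4) * (P m - L) - 12 * (P 0 - L)
        - ∑ j ∈ Finset.range m, (2*((j:ℝ)+4)) * (P (j+1) - L) := by
    intro m
    induction m with
    | zero => simp; ring
    | succ m ih =>
      have h4 : ((m:ℝ)+4) ≠ 0 := by positivity
      have hPs : P (m+1) = P m + e (m+2) / ((m:ℝ)+4) := Finset.sum_range_succ _ m
      rw [Finset.sum_range_succ, ih, Finset.sum_range_succ, hPs]
      push_cast
      field_simp
      ring
  -- the three little-o facts
  have hg_sum_tendsto : Tendsto (fun m => ∑ j ∈ Finset.range m, ((j:ℝ)+3)) atTop atTop := by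
    apply tendsto_atTop_mono (fun m => ?_) tendsto_natCast_atTop_atTop
    calc (m:ℝ) = ∑ j ∈ Finset.range m, 1 := by simp
    _ ≤ ∑ j ∈ Finset.range m, ((j:ℝ)+3) := by
        apply Finset.sum_le_sum; intro j _
        have := Nat.cast_nonneg (α := ℝ) j; linarith
  have hg_bigO : (fun m => ∑ j ∈ Finset.range m, ((j:ℝ)+3)) =O[atTop] fun m => (m:ℝ)^2 := by
    rw [isBigO_iff]
    refine ⟨3, ?_⟩
    filter_upwards [eventually_ge_atTop 1] with m hm
    have h1 : (1:ℝ) ≤ (m:ℝ) := by exact_mod_cast hm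
    have : ∑ j ∈ Finset.range m, ((j:ℝ)+3) ≤ ∑ j ∈ Finset.range m, ((m:ℝ)+2) := by
      apply Finset.sum_le_sum; intro j hj
      have : (j:ℝ) ≤ (m:ℝ) - 1 := by
        have : j + 1 ≤ m := Finset.mem_range.1 hj
        have := (Nat.cast_le (α := ℝ)).2 this
        push_cast at this; linarith
      linarith
    rw [Real.norm_eq_abs, Real.norm_eq_abs]
    rw [abs_of_nonneg (by positivity), abs_of_nonneg (by positivity)]
    simp only [Finset.sum_const, Finset.card_range, nsmul_eq_mul] at this ⊢
    nlinarith
  have hA : (fun m => ∑ j ∈ Finset.range m, ((j:ℝ)+3) * e (j+2)) =o[atTop]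
      fun m => (m:ℝ)^2 := by
    have hPL : Tendsto (fun m => P m - L) atTop (nhds 0) := by
      simpa using hP.sub_const L
    have h1 : (fun m : ℕ => (((m:ℝ)+3) * ((m:ℝ)+4)) * (P m - L)) =o[atTop] fun m => (m:ℝ)^2 := by
      have hw : (fun m : ℕ => ((m:ℝ)+3) * ((m:ℝ)+4)) =O[atTop] fun m : ℕ => (m:ℝ)^2 := by
        rw [isBigO_iff]
        refine ⟨20, ?_⟩
        filter_upwards [eventually_ge_atTop 1] with m hm
        have h1 : (1:ℝ) ≤ (m:ℝ) := by exact_mod_cast hm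
        rw [Real.norm_eq_abs, Real.norm_eq_abs, abs_of_nonneg (by positivity),
          abs_of_nonneg (by positivity)]
        nlinarith
      have hPLo : (fun m : ℕ => P m - L) =o[atTop] (fun _ => (1:ℝ)) :=
        (isLittleO_one_iff ℝ).2 hPL
      have := hw.mul_isLittleO hPLo
      simpa using this
    have h2 : (fun _ : ℕ => 12 * (P 0 - L)) =o[atTop] fun m => (m:ℝ)^2 := by
      apply isLittleO_const_left.2
      right
      have h2' : Tendsto (fun m : ℕ => (m:ℝ)^2) atTop atTop :=
        (tendsto_pow_atTop two_ne_zero).comp tendsto_natCast_atTop_atTop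
      exact h2'.congr (fun m => (Real.norm_of_nonneg (by positivity)).symm)
    have h3 : (fun m => ∑ j ∈ Finset.range m, (2*((j:ℝ)+4)) * (P (j+1) - L)) =o[atTop]
        fun m => (m:ℝ)^2 := by
      have hf : (fun j : ℕ => (2*((j:ℝ)+4)) * (P (j+1) - L)) =o[atTop] fun j => ((j:ℝ)+3) := by
        have hb : (fun j : ℕ => 2*((j:ℝ)+4)) =O[atTop] fun j => ((j:ℝ)+3) := by
          rw [isBigO_iff]
          refine ⟨4, ?_⟩
          filter_upwards with j
          rw [Real.norm_eq_abs, Real.norm_eq_abs, abs_of_nonneg (by positivity),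
            abs_of_nonneg (by positivity)]
          nlinarith [Nat.cast_nonneg (α := ℝ) j]
        have hsmall : (fun j : ℕ => P (j+1) - L) =o[atTop] (fun _ => (1:ℝ)) :=
          (isLittleO_one_iff ℝ).2 (hPL.comp (tendsto_add_atTop_nat 1))
        have := hb.mul_isLittleO hsmall
        simpa [mul_comm] using this
      exact ((hf.sum_range (fun j => by positivity) hg_sum_tendsto).trans_isBigO hg_bigO)
    have := (h1.sub h2).sub h3
    apply this.congr' ?_ EventuallyEq.rfl
    filter_upwards with m
    rw [abel m]
  have hB : (fun m => ∑ j ∈ Finset.range m, ((j:ℝ)+3) * s (j+2)) =o[atTop]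
      fun m => (m:ℝ)^2 := by
    have hf : (fun j : ℕ => ((j:ℝ)+3) * s (j+2)) =o[atTop] fun j : ℕ => ((j:ℝ)+3) := by
      have hsmall : (fun j : ℕ => s (j+2)) =o[atTop] (fun _ => (1:ℝ)) :=
        (isLittleO_one_iff ℝ).2 (hs.comp (tendsto_add_atTop_nat 2))
      have hb : (fun j : ℕ => ((j:ℝ)+3)) =O[atTop] fun j : ℕ => ((j:ℝ)+3) := isBigO_refl _ _
      have := hb.mul_isLittleO hsmall
      simpa using this
    exact (hf.sum_range (fun j => by positivity) hg_sum_tendsto).trans_isBigO hg_bigO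
  have hC0 : 0 ≤ C := by
    have h0 := ht 0
    norm_num at h0
    nlinarith [abs_nonneg (t 0)]
  have hD : (fun m => ∑ j ∈ Finset.range m, ((j:ℝ)+3) * ((j:ℝ)+4) * t (j+2)) =o[atTop]
      fun m => (m:ℝ)^2 := by
    have hbd : ∀ j : ℕ, |((j:ℝ)+3) * ((j:ℝ)+4) * t (j+2)| ≤ C := by
      intro j
      have h5 : (0:ℝ) < ((j:ℝ)+5)^2 := by positivity
      have htj := ht (j+2)
      push_cast at htj
      have h1 : |t (j+2)| ≤ C / ((j:ℝ)+5)^2 := by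
        convert htj using 3 <;> ring
      rw [abs_mul, abs_of_nonneg (show (0:ℝ) ≤ ((j:ℝ)+3) * ((j:ℝ)+4) by positivity)]
      calc ((j:ℝ)+3) * ((j:ℝ)+4) * |t (j+2)| ≤ ((j:ℝ)+3) * ((j:ℝ)+4) * (C / ((j:ℝ)+5)^2) := by
            apply mul_le_mul_of_nonneg_left h1 (by positivity)
      _ ≤ C := by
            rw [mul_div_assoc', div_le_iff₀ h5]
            nlinarith [Nat.cast_nonneg (α := ℝ) j]
    have hO : (fun m => ∑ j ∈ Finset.range m, ((j:ℝ)+3) * ((j:ℝ)+4) * t (j+2)) =O[atTop]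
        fun m => (m:ℝ) := by
      rw [isBigO_iff]
      refine ⟨C, ?_⟩
      filter_upwards with m
      rw [Real.norm_eq_abs, Real.norm_natCast]
      calc |∑ j ∈ Finset.range m, ((j:ℝ)+3) * ((j:ℝ)+4) * t (j+2)|
          ≤ ∑ j ∈ Finset.range m, |((j:ℝ)+3) * ((j:ℝ)+4) * t (j+2)| :=
            Finset.abs_sum_le_sum_abs _ _
      _ ≤ ∑ _j ∈ Finset.range m, C := Finset.sum_le_sum fun j _ => hbd j
      _ = C * m := by simp [mul_comm]
    have hlin : (fun m : ℕ => (m:ℝ)) =o[atTop] fun m : ℕ => (m:ℝ)^2 := by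
      have : (fun x : ℝ => x) =o[atTop] fun x : ℝ => x^2 := by
        simpa using isLittleO_pow_pow_atTop_of_lt (𝕜 := ℝ) (show 1 < 2 by norm_num)
      exact this.comp_tendsto tendsto_natCast_atTop_atTop
    exact hO.trans_isLittleO hlin
  -- combine
  have hconst : (fun _ : ℕ => 6 * z 1) =o[atTop] fun m => (m:ℝ)^2 := by
    apply isLittleO_const_left.2
    right
    have h2' : Tendsto (fun m : ℕ => (m:ℝ)^2) atTop atTop :=
      (tendsto_pow_atTop two_ne_zero).comp tendsto_natCast_atTop_atTop
    exact h2'.congr (fun m => (Real.norm_of_nonneg (by positivity)).symm)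
  have hF : (fun m => 6 * z 1 + ∑ j ∈ Finset.range m,
      (((j:ℝ)+3) * (e (j+2) + s (j+2)) + ((j:ℝ)+3) * ((j:ℝ)+4) * t (j+2))) =o[atTop]
      fun m => (m:ℝ)^2 := by
    have := ((hconst.add hA).add hB).add hD
    apply this.congr' ?_ EventuallyEq.rfl
    filter_upwards with m
    rw [add_assoc, add_assoc, ← Finset.sum_add_distrib, ← Finset.sum_add_distrib]
    congr 1
    apply Finset.sum_congr rfl
    intro j _
    ring
  have hw2 : (fun m : ℕ => (m:ℝ)^2) =O[atTop] fun m : ℕ => ((m:ℝ)+2) * ((m:ℝ)+3) := by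
    rw [isBigO_iff]
    refine ⟨1, ?_⟩
    filter_upwards with m
    rw [Real.norm_eq_abs, Real.norm_eq_abs, abs_of_nonneg (by positivity),
      abs_of_nonneg (by positivity)]
    nlinarith [Nat.cast_nonneg (α := ℝ) m]
  have hzo : (fun m : ℕ => ((m:ℝ)+2) * ((m:ℝ)+3) * z (m+1)) =o[atTop]
      fun m : ℕ => ((m:ℝ)+2) * ((m:ℝ)+3) := by
    apply (hF.trans_isBigO hw2).congr' ?_ EventuallyEq.rfl
    filter_upwards with m
    rw [key m]
  have htend : Tendsto (fun m : ℕ => z (m+1)) atTop (nhds 0) := by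
    have hne : ∀ m : ℕ, ((m:ℝ)+2) * ((m:ℝ)+3) ≠ 0 := fun m => by positivity
    have := (isLittleO_iff_tendsto (fun m h => absurd h (hne m))).1 hzo
    apply this.congr
    intro m
    field_simp
  exact (tendsto_add_atTop_iff_nat 1).1 htend

private theorem series_conv {Ω : Type*} {m : MeasurableSpace Ω} {μ : Measure Ω}
    [IsProbabilityMeasure μ] (ℱ : Filtration ℕ m) (ε : ℕ → Ω → ℝ)
    (hadapted : Adapted ℱ ε)
    (hint : ∀ n, Integrable (ε n) μ)
    (hmart : ∀ n, μ[ε (n+1) | ℱ n] =ᵐ[μ] 0)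
    (hεbd : ∀ n ω, |ε n ω| ≤ 2) :
    ∀ᵐ ω ∂μ, ∃ L, Tendsto (fun n => ∑ j ∈ Finset.range n, ε (j+2) ω / ((j:ℝ)+4))
      atTop (nhds L) := by
  set 𝒢 : Filtration ℕ m :=
    { seq := fun n => ℱ (n+1),
      mono' := fun i j hij => ℱ.mono (by omega),
      le' := fun n => ℱ.le _ } with h𝒢
  set M : ℕ → Ω → ℝ := fun n ω => ∑ j ∈ Finset.range n, ε (j+2) ω / ((j:ℝ)+4) with hM
  have hMadp : ∀ n, StronglyMeasurable[ℱ (n+1)] (M n) := by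
    intro n
    apply Finset.stronglyMeasurable_fun_sum
    intro j hj
    have hj' : j + 2 ≤ n + 1 := by have := Finset.mem_range.1 hj; omega
    simp only [div_eq_mul_inv]
    exact ((hadapted (j+2)).mono (ℱ.mono hj') le_rfl).stronglyMeasurable.mul stronglyMeasurable_const
  have hMint : ∀ n, Integrable (M n) μ :=
    fun n => integrable_finset_sum _ (fun j _ => (hint (j+2)).div_const _)
  have hMbdd : ∀ n, ∃ K, ∀ ω, ‖M n ω‖ ≤ K := by
    intro n
    refine ⟨∑ j ∈ Finset.range n, 2 / ((j:ℝ)+4), fun ω => ?_⟩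
    calc ‖M n ω‖ ≤ ∑ j ∈ Finset.range n, ‖ε (j+2) ω / ((j:ℝ)+4)‖ := norm_sum_le _ _
    _ ≤ ∑ j ∈ Finset.range n, 2 / ((j:ℝ)+4) := by
        apply Finset.sum_le_sum
        intro j _
        rw [norm_div, Real.norm_eq_abs, Real.norm_eq_abs, abs_of_nonneg (by positivity : (0:ℝ) ≤ (j:ℝ)+4)]
        exact div_le_div_of_nonneg_right (hεbd _ ω) (by positivity)
  have hMsucc : ∀ n, M (n+1) = M n + (((n:ℝ)+4)⁻¹ • ε (n+2)) := by
    intro n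
    funext ω
    simp only [hM, Pi.add_apply, Pi.smul_apply, smul_eq_mul]
    rw [Finset.sum_range_succ]
    ring
  have hmartM : Martingale M 𝒢 μ := by
    refine martingale_nat (fun n => hMadp n) hMint (fun n => ?_)
    have h1 : μ[M (n+1)|ℱ (n+1)] =ᵐ[μ] μ[M n|ℱ (n+1)] + μ[((n:ℝ)+4)⁻¹ • ε (n+2)|ℱ (n+1)] := by
      rw [hMsucc n]
      exact condExp_add (hMint n) ((hint (n+2)).smul _) _
    have h3 : μ[((n:ℝ)+4)⁻¹ • ε (n+2)|ℱ (n+1)] =ᵐ[μ] 0 := by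
      refine (condExp_smul _ _ _).trans ?_
      filter_upwards [hmart (n+1)] with ω hω
      simp only [Pi.smul_apply, smul_eq_mul, Pi.zero_apply]
      rw [show ε (n+1+1) = ε (n+2) from rfl] at hω
      simp [hω]
    refine EventuallyEq.symm (h1.trans ?_)
    rw [condExp_of_stronglyMeasurable (ℱ.le (n+1)) (hMadp n) (hMint n)]
    filter_upwards [h3] with ω hω3
    simp [hω3]
  -- cross term
  have hcrossInt : ∀ n, Integrable (M n * ε (n+2)) μ := by
    intro n
    obtain ⟨K, hK⟩ := hMbdd n
    exact (hint (n+2)).bdd_mul ((hMadp n).mono (ℱ.le _)).aestronglyMeasurable (Eventually.of_forall hK)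
  have hcross : ∀ n, ∫ ω, M n ω * ε (n+2) ω ∂μ = 0 := by
    intro n
    have hpull : μ[M n * ε (n+2)|ℱ (n+1)] =ᵐ[μ] M n * μ[ε (n+2)|ℱ (n+1)] :=
      condExp_mul_of_stronglyMeasurable_left (hMadp n) (hcrossInt n) (hint (n+2))
    have h0 : μ[M n * ε (n+2)|ℱ (n+1)] =ᵐ[μ] 0 := by
      refine hpull.trans ?_
      filter_upwards [hmart (n+1)] with ω hω
      rw [show ε (n+1+1) = ε (n+2) from rfl] at hω
      simp [hω]
    calc ∫ ω, M n ω * ε (n+2) ω ∂μ = ∫ ω, (μ[M n * ε (n+2)|ℱ (n+1)]) ω ∂μ :=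
          (integral_condExp (ℱ.le (n+1))).symm
    _ = 0 := by rw [integral_congr_ae h0]; simp
  -- second moments
  have hε2int : ∀ k, Integrable (fun ω => ε k ω ^ 2) μ := by
    intro k
    have : Integrable (ε k * ε k) μ :=
      (hint k).bdd_mul (hint k).aestronglyMeasurable (c := 2) (Eventually.of_forall fun ω => by
        rw [Real.norm_eq_abs]; exact hεbd k ω)
    exact this.congr (by filter_upwards with ω; simp [Pi.mul_apply]; ring)
  have hM2int : ∀ n, Integrable (fun ω => M n ω ^ 2) μ := by
    intro n
    obtain ⟨K, hK⟩ := hMbdd n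
    have : Integrable (M n * M n) μ :=
      (hMint n).bdd_mul ((hMadp n).mono (ℱ.le _)).aestronglyMeasurable (Eventually.of_forall hK)
    exact this.congr (by filter_upwards with ω; simp [Pi.mul_apply]; ring)
  have hε2bd : ∀ k, ∫ ω, ε k ω ^ 2 ∂μ ≤ 4 := by
    intro k
    calc ∫ ω, ε k ω ^ 2 ∂μ ≤ ∫ _ω, (4:ℝ) ∂μ := by
          apply integral_mono (hε2int k) (integrable_const 4)
          intro ω
          show ε k ω ^ 2 ≤ 4
          have := hεbd k ω
          nlinarith [abs_nonneg (ε k ω), sq_abs (ε k ω)]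
    _ = 4 := by simp
  have hM2 : ∀ n, ∫ ω, M n ω ^ 2 ∂μ ≤ 2 - 4/((n:ℝ)+3) := by
    intro n
    induction n with
    | zero => simp [hM]; norm_num
    | succ n ih =>
      have h4 : ((n:ℝ)+4) ≠ 0 := by positivity
      have hsplit : ∀ ω, M (n+1) ω ^ 2
          = M n ω ^ 2 + (2*((n:ℝ)+4)⁻¹) * (M n ω * ε (n+2) ω)
            + ((n:ℝ)+4)⁻¹^2 * ε (n+2) ω ^ 2 := by
        intro ω
        rw [hMsucc n]
        simp only [Pi.add_apply, Pi.smul_apply, smul_eq_mul]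
        ring
      have hintc : Integrable (fun ω => M n ω * ε (n+2) ω) μ :=
        (hcrossInt n).congr (Eventually.of_forall (fun ω => rfl))
      have hint1 : Integrable (fun ω => M n ω ^ 2
          + (2*((n:ℝ)+4)⁻¹) * (M n ω * ε (n+2) ω)) μ :=
        (hM2int n).add (hintc.const_mul (2*((n:ℝ)+4)⁻¹))
      have : ∫ ω, M (n+1) ω ^ 2 ∂μ
          = ∫ ω, M n ω ^ 2 ∂μ + (2*((n:ℝ)+4)⁻¹) * ∫ ω, M n ω * ε (n+2) ω ∂μ
            + ((n:ℝ)+4)⁻¹^2 * ∫ ω, ε (n+2) ω ^ 2 ∂μ := by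
        rw [show (fun ω => M (n+1) ω ^ 2) = fun ω => M n ω ^ 2
            + (2*((n:ℝ)+4)⁻¹) * (M n ω * ε (n+2) ω)
            + ((n:ℝ)+4)⁻¹^2 * ε (n+2) ω ^ 2 from funext hsplit]
        rw [integral_add hint1 ((hε2int (n+2)).const_mul _),
          integral_add (hM2int n) (hintc.const_mul (2*((n:ℝ)+4)⁻¹)),
          integral_const_mul, integral_const_mul]
      rw [this, hcross n]
      have harith : ((n:ℝ)+4)⁻¹^2 * 4 ≤ 4/((n:ℝ)+3) - 4/((n:ℝ)+4) := by
        rw [inv_pow, inv_eq_one_div, div_sub_div _ _ (by positivity : ((n:ℝ)+3) ≠ 0) h4,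
          div_mul_eq_mul_div, div_le_div_iff₀ (by positivity) (by positivity)]
        nlinarith [Nat.cast_nonneg (α := ℝ) n]
      have hε4 := hε2bd (n+2)
      have hc2 : (0:ℝ) ≤ ((n:ℝ)+4)⁻¹^2 := by positivity
      push_cast
      have hcast : ((n:ℝ)+1+3) = (n:ℝ)+4 := by ring
      rw [hcast]
      linarith [mul_le_mul_of_nonneg_left hε4 hc2]
  have hM1 : ∀ n, eLpNorm (M n) 1 μ ≤ ((3:ℝ≥0) : ℝ≥0∞) := by
    intro n
    have habs : ∫ ω, ‖M n ω‖ ∂μ ≤ 3 := by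
      have h1 : ∀ ω, ‖M n ω‖ ≤ 1 + M n ω ^ 2 := by
        intro ω
        rw [Real.norm_eq_abs]
        nlinarith [sq_abs (M n ω), abs_nonneg (M n ω)]
      calc ∫ ω, ‖M n ω‖ ∂μ ≤ ∫ ω, (1 + M n ω ^ 2) ∂μ :=
            integral_mono (hMint n).norm ((integrable_const 1).add (hM2int n)) h1
      _ = 1 + ∫ ω, M n ω ^ 2 ∂μ := by
            rw [integral_add (integrable_const 1) (hM2int n)]; simp
      _ ≤ 3 := by
            have := hM2 n
            have : ∫ ω, M n ω ^ 2 ∂μ ≤ 2 := le_trans this (by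
              have : (0:ℝ) ≤ 4/((n:ℝ)+3) := by positivity
              linarith)
            linarith
    rw [eLpNorm_one_eq_lintegral_enorm, ← ofReal_integral_norm_eq_lintegral_enorm (hMint n)]
    calc ENNReal.ofReal (∫ ω, ‖M n ω‖ ∂μ) ≤ ENNReal.ofReal 3 :=
          ENNReal.ofReal_le_ofReal habs
    _ = ((3:ℝ≥0) : ℝ≥0∞) := by norm_num
  have hDoob := hmartM.submartingale.ae_tendsto_limitProcess hM1
  filter_upwards [hDoob] with ω hω
  exact ⟨𝒢.limitProcess M μ ω, hω⟩

/-- Robbins–Monro type convergence: if `z_{n+1} = z_n - 2z_n/(n+3) + ε'_{n+1}/(n+3)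
+ s'_{n+1}/(n+3) + t_{n+1}` with `z_1 ≥ 0`, bounded martingale increments `|ε'_n| ≤ 2`,
nonnegative `s'_n → 0`, and `|t_n| ≤ C/(n+3)²` (hence summable), then `z_n → 0` a.s. -/
theorem stmt_3 {Ω : Type*} {m : MeasurableSpace Ω} {μ : Measure Ω} [IsProbabilityMeasure μ]
    (ℱ : Filtration ℕ m) (z ε s t : ℕ → Ω → ℝ) (C : ℝ)
    (hz1 : ∀ ω, 0 ≤ z 1 ω)
    (hadapted : Adapted ℱ ε)
    (hint : ∀ n, Integrable (ε n) μ)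
    (hmart : ∀ n, μ[ε (n+1) | ℱ n] =ᵐ[μ] 0)
    (hεbd : ∀ n ω, |ε n ω| ≤ 2)
    (hs_nonneg : ∀ n ω, 0 ≤ s n ω)
    (hs_lim : ∀ ω, Tendsto (fun n => s n ω) atTop (nhds 0))
    (ht : ∀ n ω, |t n ω| ≤ C / ((n:ℝ)+3)^2)
    (hrec : ∀ ω, ∀ n ≥ 1, z (n+1) ω = z n ω - 2 * z n ω / ((n:ℝ)+3)
      + ε (n+1) ω / ((n:ℝ)+3) + s (n+1) ω / ((n:ℝ)+3) + t (n+1) ω) :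
    ∀ᵐ ω ∂μ, Tendsto (fun n => z n ω) atTop (nhds 0) := by
  filter_upwards [series_conv ℱ ε hadapted hint hmart hεbd] with ω hω
  obtain ⟨L, hL⟩ := hω
  exact det_lemma (fun n => z n ω) (fun n => ε n ω) (fun n => s n ω) (fun n => t n ω) C L
    hL (hs_lim ω) (fun n => ht n ω) (fun n hn => hrec ω n hn)
end

section
/- For α, β < 1, let h_{(α,β)}(x) = (1/B(1−α,1−β)) ∫_0^{1−x} t^{−α}(1−t)^{−β} dt and let p(α,β) denote its fixed point; if α ≤ α' < 1 and β' ≤ β < 1, then p(α,β) ≤ p(α',β'). -/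
open MeasureTheory intervalIntegral Set


noncomputable def fab (a b : ℝ) : ℝ → ℝ := fun t => t ^ (-a) * (1-t) ^ (-b)

lemma fab_nonneg (a b : ℝ) {t : ℝ} (ht : 0 ≤ t) (ht1 : t ≤ 1) : 0 ≤ fab a b t :=
  mul_nonneg (Real.rpow_nonneg ht _) (Real.rpow_nonneg (by linarith) _)

lemma intg_half (a b : ℝ) (ha : a < 1) :
    IntervalIntegrable (fab a b) volume 0 (1/2) := by
  apply IntervalIntegrable.mul_continuousOn
  · exact intervalIntegrable_rpow' (by linarith)
  · apply ContinuousOn.rpow_const (by fun_prop)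
    intro x hx
    rw [uIcc_of_le (by norm_num : (0:ℝ) ≤ 1/2)] at hx
    exact Or.inl (sub_ne_zero.mpr (ne_of_gt (by linarith [hx.2])))

lemma intg_full (a b : ℝ) (ha : a < 1) (hb : b < 1) :
    IntervalIntegrable (fab a b) volume 0 1 := by
  refine (intg_half a b ha).trans ?_
  have h := (intg_half b a hb).comp_sub_left 1
  have he : (fun x => fab b a (1 - x)) = fab a b := by
    ext x; simp only [fab]; rw [sub_sub_cancel, mul_comm]
  rw [he] at h
  norm_num at h
  exact h.symm

lemma intg_sub (a b : ℝ) (ha : a < 1) (hb : b < 1) {c d : ℝ}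
    (hc : 0 ≤ c) (hd : d ≤ 1) (hcd : c ≤ d) :
    IntervalIntegrable (fab a b) volume c d :=
  (intg_full a b ha hb).mono_set (by
    rw [uIcc_of_le hcd, uIcc_of_le zero_le_one]; exact Icc_subset_Icc hc hd)

lemma S_pos (a b : ℝ) (ha : a < 1) (hb : b < 1) :
    0 < ∫ t in (0:ℝ)..(1:ℝ), fab a b t := by
  apply intervalIntegral_pos_of_pos_on (intg_full a b ha hb)
  · intro x hx
    exact mul_pos (Real.rpow_pos_of_pos hx.1 _) (Real.rpow_pos_of_pos (by linarith [hx.2]) _)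
  · norm_num

/-- On `Ioo 0 u`, `c * fab a b t ≤ fab a' b' t` where `c = u^(a-a')*(1-u)^(b-b')`. -/
lemma ratio_bound (a a' b b' u t : ℝ) (haa : a ≤ a') (hbb : b' ≤ b)
    (ht : 0 < t) (ht1 : t < 1) (hu : 0 < u) (hu1 : u < 1) (htu : t ≤ u) :
    u ^ (a - a') * (1-u) ^ (b - b') * fab a b t ≤ fab a' b' t := by
  have key : u ^ (a - a') * (1-u) ^ (b - b') ≤ t ^ (a - a') * (1-t) ^ (b - b') := by
    apply mul_le_mul
    · exact Real.rpow_le_rpow_of_nonpos ht htu (by linarith)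
    · exact Real.rpow_le_rpow (by linarith) (by linarith) (by linarith)
    · exact Real.rpow_nonneg (by linarith) _
    · exact Real.rpow_nonneg ht.le _
  have hcalc : t ^ (a - a') * (1-t) ^ (b - b') * fab a b t = fab a' b' t := by
    simp only [fab]
    rw [show -a' = (a-a') + -a by ring, show -b' = (b-b') + -b by ring,
      Real.rpow_add ht, Real.rpow_add (by linarith : (0:ℝ) < 1 - t)]
    ring
  calc u ^ (a - a') * (1-u) ^ (b - b') * fab a b t
      ≤ t ^ (a - a') * (1-t) ^ (b - b') * fab a b t :=
        mul_le_mul_of_nonneg_right key (fab_nonneg a b ht.le ht1.le)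
    _ = fab a' b' t := hcalc

lemma ratio_bound' (a a' b b' u t : ℝ) (haa : a ≤ a') (hbb : b' ≤ b)
    (ht : 0 < t) (ht1 : t < 1) (hu : 0 < u) (hu1 : u < 1) (htu : u ≤ t) :
    fab a' b' t ≤ u ^ (a - a') * (1-u) ^ (b - b') * fab a b t := by
  have key : t ^ (a - a') * (1-t) ^ (b - b') ≤ u ^ (a - a') * (1-u) ^ (b - b') := by
    apply mul_le_mul
    · exact Real.rpow_le_rpow_of_nonpos hu htu (by linarith)
    · exact Real.rpow_le_rpow (by linarith) (by linarith) (by linarith)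
    · exact Real.rpow_nonneg (by linarith) _
    · exact Real.rpow_nonneg hu.le _
  have hcalc : t ^ (a - a') * (1-t) ^ (b - b') * fab a b t = fab a' b' t := by
    simp only [fab]
    rw [show -a' = (a-a') + -a by ring, show -b' = (b-b') + -b by ring,
      Real.rpow_add ht, Real.rpow_add (by linarith : (0:ℝ) < 1 - t)]
    ring
  calc fab a' b' t = t ^ (a - a') * (1-t) ^ (b - b') * fab a b t := hcalc.symm
    _ ≤ u ^ (a - a') * (1-u) ^ (b - b') * fab a b t :=
        mul_le_mul_of_nonneg_right key (fab_nonneg a b ht.le ht1.le)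

open intervalIntegral in
lemma key_ineq (a a' b b' : ℝ) (haa : a ≤ a') (ha' : a' < 1) (hbb : b' ≤ b) (hb : b < 1)
    (u : ℝ) (hu0 : 0 ≤ u) (hu1 : u ≤ 1) :
    (∫ t in (0:ℝ)..u, fab a b t) * (∫ t in (0:ℝ)..(1:ℝ), fab a' b' t) ≤
      (∫ t in (0:ℝ)..u, fab a' b' t) * (∫ t in (0:ℝ)..(1:ℝ), fab a b t) := by
  have ha : a < 1 := lt_of_le_of_lt haa ha'
  have hb' : b' < 1 := lt_of_le_of_lt hbb hb
  rcases eq_or_lt_of_le hu0 with h0 | h0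
  · simp [← h0]
  rcases eq_or_lt_of_le hu1 with h1 | h1
  · rw [h1]; exact le_of_eq (mul_comm _ _)
  -- now 0 < u < 1
  set c : ℝ := u ^ (a - a') * (1-u) ^ (b - b') with hc
  have hc0 : 0 ≤ c :=
    mul_nonneg (Real.rpow_nonneg h0.le _) (Real.rpow_nonneg (by linarith) _)
  have null2 : ∀ (x y : ℝ), (volume ({x, y} : Set ℝ)) = 0 := fun x y =>
    ((Set.finite_singleton y).insert x).measure_zero _
  have hintA := intg_sub a b ha hb le_rfl hu1 hu0
  have hintA' := intg_sub a' b' ha' hb' le_rfl hu1 hu0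
  have hintB := intg_sub a b ha hb hu0 le_rfl hu1
  have hintB' := intg_sub a' b' ha' hb' hu0 le_rfl hu1
  -- c * A ≤ A'
  have hA : c * (∫ t in (0:ℝ)..u, fab a b t) ≤ ∫ t in (0:ℝ)..u, fab a' b' t := by
    rw [← intervalIntegral.integral_const_mul]
    apply integral_mono_ae_restrict hu0 (hintA.const_mul c) hintA'
    have hm1 : ∀ᵐ t ∂(volume.restrict (Icc 0 u)), t ∈ Icc 0 u :=
      ae_restrict_mem measurableSet_Icc
    have hm2 : ∀ᵐ t ∂(volume.restrict (Icc 0 u)), t ∉ ({0, u} : Set ℝ) :=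
      ae_restrict_of_ae (measure_eq_zero_iff_ae_notMem.mp (null2 0 u))
    filter_upwards [hm1, hm2] with t ht hne
    simp only [Set.mem_insert_iff, Set.mem_singleton_iff, not_or] at hne
    have ht0 : 0 < t := lt_of_le_of_ne ht.1 (Ne.symm hne.1)
    exact ratio_bound a a' b b' u t haa hbb ht0 (by linarith [ht.2]) h0 h1 ht.2
  -- B' ≤ c * B
  have hB : (∫ t in u..(1:ℝ), fab a' b' t) ≤ c * ∫ t in u..(1:ℝ), fab a b t := by
    rw [← intervalIntegral.integral_const_mul]
    apply integral_mono_ae_restrict hu1 hintB' (hintB.const_mul c)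
    have h1' : ∀ᵐ t ∂(volume.restrict (Icc u 1)), t ∈ Icc u 1 :=
      ae_restrict_mem measurableSet_Icc
    have h2' : ∀ᵐ t ∂(volume.restrict (Icc u 1)), t ∉ ({u, 1} : Set ℝ) :=
      ae_restrict_of_ae (measure_eq_zero_iff_ae_notMem.mp (null2 u 1))
    filter_upwards [h1', h2'] with t ht hne
    simp only [Set.mem_insert_iff, Set.mem_singleton_iff, not_or] at hne
    have ht1 : t < 1 := lt_of_le_of_ne ht.2 hne.2
    exact ratio_bound' a a' b b' u t haa hbb (lt_of_lt_of_le h0 ht.1) ht1 h0 h1 ht.1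
  have hsplit : (∫ t in (0:ℝ)..u, fab a b t) + (∫ t in u..(1:ℝ), fab a b t)
      = ∫ t in (0:ℝ)..(1:ℝ), fab a b t :=
    integral_add_adjacent_intervals hintA hintB
  have hsplit' : (∫ t in (0:ℝ)..u, fab a' b' t) + (∫ t in u..(1:ℝ), fab a' b' t)
      = ∫ t in (0:ℝ)..(1:ℝ), fab a' b' t :=
    integral_add_adjacent_intervals hintA' hintB'
  have hAnn : 0 ≤ ∫ t in (0:ℝ)..u, fab a b t :=
    integral_nonneg hu0 (fun t ht => fab_nonneg a b ht.1 (le_trans ht.2 hu1))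
  have hBnn : 0 ≤ ∫ t in u..(1:ℝ), fab a b t :=
    integral_nonneg hu1 (fun t ht => fab_nonneg a b (le_trans hu0 ht.1) ht.2)
  have hA'nn : 0 ≤ ∫ t in (0:ℝ)..u, fab a' b' t :=
    integral_nonneg hu0 (fun t ht => fab_nonneg a' b' ht.1 (le_trans ht.2 hu1))
  have hB'nn : 0 ≤ ∫ t in u..(1:ℝ), fab a' b' t :=
    integral_nonneg hu1 (fun t ht => fab_nonneg a' b' (le_trans hu0 ht.1) ht.2)
  nlinarith [mul_le_mul_of_nonneg_left hB hAnn, mul_le_mul_of_nonneg_right hA hBnn]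


/-- The normalized incomplete Beta function of the paper:
`h_{(α,β)}(x) = (∫_0^{1-x} t^{-α}(1-t)^{-β} dt) / B(1-α, 1-β)`. -/
noncomputable def hab (α β x : ℝ) : ℝ :=
  (∫ t in (0:ℝ)..(1-x), t ^ (-α) * (1-t) ^ (-β)) /
    ∫ t in (0:ℝ)..(1:ℝ), t ^ (-α) * (1-t) ^ (-β)

/-- Monotonicity of the fixed point in the parameters: if `α ≤ α' < 1` and `β' ≤ β < 1`,
and `p`, `p'` are fixed points of `h_{(α,β)}` and `h_{(α',β')}` in `[0,1]` respectively,
then `p ≤ p'`. -/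
theorem stmt_10 (α α' β β' p p' : ℝ)
    (hαα' : α ≤ α') (hα' : α' < 1) (hβ'β : β' ≤ β) (hβ : β < 1)
    (hp : p ∈ Set.Icc (0:ℝ) 1) (hfp : hab α β p = p)
    (hp' : p' ∈ Set.Icc (0:ℝ) 1) (hfp' : hab α' β' p' = p') :
    p ≤ p' := by
  have hα : α < 1 := lt_of_le_of_lt hαα' hα'
  have hβ' : β' < 1 := lt_of_le_of_lt hβ'β hβ
  have hS : 0 < ∫ t in (0:ℝ)..(1:ℝ), fab α β t := S_pos α β hα hβ
  have hS' : 0 < ∫ t in (0:ℝ)..(1:ℝ), fab α' β' t := S_pos α' β' hα' hβ'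
  by_contra hcon
  push_neg at hcon
  have hu0 : (0:ℝ) ≤ 1 - p := by linarith [hp.2]
  have hu1 : 1 - p ≤ 1 := by linarith [hp.1]
  have hrw : hab α β p = (∫ t in (0:ℝ)..(1-p), fab α β t) /
      (∫ t in (0:ℝ)..(1:ℝ), fab α β t) := rfl
  have hrw' : hab α' β' p' = (∫ t in (0:ℝ)..(1-p'), fab α' β' t) /
      (∫ t in (0:ℝ)..(1:ℝ), fab α' β' t) := rfl
  -- step 1: p = hab α β p ≤ hab α' β' p
  have step1 : hab α β p ≤ (∫ t in (0:ℝ)..(1-p), fab α' β' t) /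
      (∫ t in (0:ℝ)..(1:ℝ), fab α' β' t) := by
    rw [hrw, div_le_div_iff₀ hS hS']
    exact key_ineq α α' β β' hαα' hα' hβ'β hβ (1-p) hu0 hu1
  -- step 2: monotonicity in the endpoint
  have step2 : (∫ t in (0:ℝ)..(1-p), fab α' β' t) ≤ ∫ t in (0:ℝ)..(1-p'), fab α' β' t := by
    apply intervalIntegral.integral_mono_interval le_rfl hu0 (by linarith : 1 - p ≤ 1 - p')
    · apply (ae_restrict_iff' measurableSet_Ioc).mpr
      exact Filter.Eventually.of_forall fun t ht =>
        fab_nonneg α' β' ht.1.le (by linarith [ht.2, hp'.1])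
    · exact intg_sub α' β' hα' hβ' le_rfl (by linarith [hp'.1]) (by linarith [hp'.2])
  have step3 : (∫ t in (0:ℝ)..(1-p), fab α' β' t) / (∫ t in (0:ℝ)..(1:ℝ), fab α' β' t)
      ≤ (∫ t in (0:ℝ)..(1-p'), fab α' β' t) / (∫ t in (0:ℝ)..(1:ℝ), fab α' β' t) :=
    by gcongr
  rw [← hrw'] at step3
  rw [hfp] at step1
  rw [hfp'] at step3
  linarith
end

section
/- Fix β < 1. Then the fixed point p(α,β) of h_{(α,β)} tends to 1 as α → 1⁻. Symmetrically, for fixed α < 1, p(α,β) → 0 as β → 1⁻. -/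
open MeasureTheory intervalIntegral Real Set Filter

lemma meas_f (α β : ℝ) : Measurable fun t : ℝ => t ^ (-α) * (1-t) ^ (-β) := by
  fun_prop

lemma nonneg_f (α β : ℝ) {t : ℝ} (h0 : 0 ≤ t) (h1 : t ≤ 1) :
    0 ≤ t ^ (-α) * (1-t) ^ (-β) :=
  mul_nonneg (Real.rpow_nonneg h0 _) (Real.rpow_nonneg (by linarith) _)

/-- bound for the right factor on [0,1/2] -/
lemma right_factor_le {β t : ℝ} (h : (1:ℝ)/2 ≤ 1 - t) (h1 : 0 ≤ t) :
    (1-t) ^ (-β) ≤ max 1 (2 ^ β) := by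
  rcases le_or_gt β 0 with hb | hb
  · refine le_trans ?_ (le_max_left _ _)
    calc (1-t) ^ (-β) ≤ 1 ^ (-β) :=
          Real.rpow_le_rpow (by linarith) (by linarith) (by linarith)
      _ = 1 := Real.one_rpow _
  · refine le_trans ?_ (le_max_right _ _)
    have : ((1:ℝ)/2) ^ (-β) = 2 ^ β := by
      rw [one_div, Real.inv_rpow (by norm_num), Real.rpow_neg (by norm_num), inv_inv]
    rw [← this]
    exact Real.rpow_le_rpow_of_nonpos (by norm_num) h (by linarith)

/-- lower bound for the right factor on [0,1/2] -/
lemma le_right_factor {β t : ℝ} (h : (1:ℝ)/2 ≤ 1 - t) (h1 : 0 ≤ t) :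
    min 1 (2 ^ β) ≤ (1-t) ^ (-β) := by
  rcases le_or_gt β 0 with hb | hb
  · refine le_trans (min_le_right _ _) ?_
    have : ((1:ℝ)/2) ^ (-β) = 2 ^ β := by
      rw [one_div, Real.inv_rpow (by norm_num), Real.rpow_neg (by norm_num), inv_inv]
    rw [← this]
    exact Real.rpow_le_rpow (by norm_num) h (by linarith)
  · refine le_trans (min_le_left _ _) ?_
    exact Real.one_le_rpow_of_pos_of_le_one_of_nonpos (by linarith) (by linarith) (by linarith)

lemma intg_half_left {α β : ℝ} (hα : α < 1) :
    IntervalIntegrable (fun t : ℝ => t ^ (-α) * (1-t) ^ (-β)) volume 0 (1/2) := by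
  have hint : IntervalIntegrable (fun t : ℝ => max 1 (2 ^ β) * t ^ (-α)) volume 0 (1/2) :=
    (intervalIntegrable_rpow' (by linarith)).const_mul _
  refine hint.mono_fun (meas_f α β).aestronglyMeasurable ?_
  filter_upwards [ae_restrict_mem measurableSet_uIoc] with t ht
  rw [uIoc_of_le (by norm_num)] at ht
  obtain ⟨ht0, ht1⟩ := ht
  have h1t : (1:ℝ)/2 ≤ 1 - t := by linarith
  have ht1' : t ≤ 1 := by linarith
  rw [Real.norm_eq_abs, Real.norm_eq_abs,
    abs_of_nonneg (nonneg_f α β ht0.le ht1'),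
    abs_of_nonneg (mul_nonneg (le_trans zero_le_one (le_max_left _ _)) (Real.rpow_nonneg ht0.le _))]
  rw [mul_comm (max 1 (2^β))]
  exact mul_le_mul_of_nonneg_left (right_factor_le h1t ht0.le) (Real.rpow_nonneg ht0.le _)

lemma intg_half_right {α β : ℝ} (hβ : β < 1) :
    IntervalIntegrable (fun t : ℝ => t ^ (-α) * (1-t) ^ (-β)) volume (1/2) 1 := by
  have h2 : IntervalIntegrable (fun t : ℝ => t ^ (-β) * (1-t) ^ (-α)) volume 0 (1/2) :=
    intg_half_left hβ
  have h3 := (h2.comp_sub_left 1)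
  simp only [show (1:ℝ) - 1/2 = 1/2 by norm_num, sub_zero] at h3
  have : (fun t : ℝ => (1-t) ^ (-β) * (1-(1-t)) ^ (-α)) =
      fun t : ℝ => t ^ (-α) * (1-t) ^ (-β) := by
    funext t; rw [sub_sub_cancel, mul_comm]
  rw [this] at h3
  exact h3.symm

lemma intg_01 {α β : ℝ} (hα : α < 1) (hβ : β < 1) :
    IntervalIntegrable (fun t : ℝ => t ^ (-α) * (1-t) ^ (-β)) volume 0 1 :=
  (intg_half_left hα).trans (intg_half_right hβ)

lemma intg_sub_s12 {α β a b : ℝ} (hα : α < 1) (hβ : β < 1) (ha : a ∈ Icc (0:ℝ) 1)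
    (hb : b ∈ Icc (0:ℝ) 1) :
    IntervalIntegrable (fun t : ℝ => t ^ (-α) * (1-t) ^ (-β)) volume a b := by
  refine (intg_01 hα hβ).mono_set ?_
  rw [uIcc_of_le (by norm_num : (0:ℝ) ≤ 1)]
  exact uIcc_subset_Icc ha hb

lemma den_pos {α β : ℝ} (hα : α < 1) (hβ : β < 1) :
    0 < ∫ t in (0:ℝ)..(1:ℝ), t ^ (-α) * (1-t) ^ (-β) := by
  refine intervalIntegral_pos_of_pos_on (intg_01 hα hβ) (fun t ht => ?_) one_pos
  exact mul_pos (Real.rpow_pos_of_pos ht.1 _) (Real.rpow_pos_of_pos (by linarith [ht.2]) _)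

/-- integral over a subinterval of [0,1] is nonneg -/
lemma intg_nonneg {α β a b : ℝ} (hab : a ≤ b) (ha : 0 ≤ a) (hb : b ≤ 1) :
    0 ≤ ∫ t in a..b, t ^ (-α) * (1-t) ^ (-β) := by
  refine intervalIntegral.integral_nonneg hab (fun t ht => ?_)
  exact nonneg_f α β (le_trans ha ht.1) (le_trans ht.2 hb)

/-- den lower bound: for α ∈ (0,1), den ≥ min 1 (2^β) / (2(1-α)) -/
lemma den_lb {α β : ℝ} (hα0 : 0 < α) (hα : α < 1) (hβ : β < 1) :
    min 1 (2 ^ β) / (2 * (1 - α)) ≤ ∫ t in (0:ℝ)..(1:ℝ), t ^ (-α) * (1-t) ^ (-β) := by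
  set c : ℝ := min 1 (2 ^ β) with hc
  have hc0 : 0 < c := lt_min one_pos (Real.rpow_pos_of_pos two_pos _)
  have hsplit : (∫ t in (0:ℝ)..(1:ℝ), t ^ (-α) * (1-t) ^ (-β)) =
      (∫ t in (0:ℝ)..(1/2:ℝ), t ^ (-α) * (1-t) ^ (-β)) +
      ∫ t in (1/2:ℝ)..(1:ℝ), t ^ (-α) * (1-t) ^ (-β) :=
    (intervalIntegral.integral_add_adjacent_intervals (intg_half_left hα)
      (intg_half_right hβ)).symm
  have h2 : (∫ t in (0:ℝ)..(1/2:ℝ), c * t ^ (-α)) ≤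
      ∫ t in (0:ℝ)..(1/2:ℝ), t ^ (-α) * (1-t) ^ (-β) := by
    refine intervalIntegral.integral_mono_on (by norm_num)
      ((intervalIntegrable_rpow' (by linarith)).const_mul _) (intg_half_left hα)
      (fun t ht => ?_)
    rw [mul_comm]
    exact mul_le_mul_of_nonneg_left (le_right_factor (by linarith [ht.2]) ht.1)
      (Real.rpow_nonneg ht.1 _)
  have h3 : (∫ t in (0:ℝ)..(1/2:ℝ), c * t ^ (-α)) = c * (((1:ℝ)/2) ^ (1-α) / (1-α)) := by
    rw [intervalIntegral.integral_const_mul, integral_rpow (Or.inl (by linarith))]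
    rw [Real.zero_rpow (by linarith), sub_zero]
    ring_nf
  have h4 : ((1:ℝ)/2) ^ ((1:ℝ)-α) ≥ 1/2 := by
    have := Real.rpow_le_rpow_of_exponent_ge (x := (1:ℝ)/2) (by norm_num) (by norm_num)
      (show 1-α ≤ 1 by linarith)
    simpa using this
  have h1a : (0:ℝ) < 1 - α := by linarith
  have h5 : c / (2 * (1-α)) ≤ c * (((1:ℝ)/2) ^ (1-α) / (1-α)) := by
    rw [show c * (((1:ℝ)/2) ^ (1-α) / (1-α)) = c * ((1:ℝ)/2) ^ (1-α) / (1-α) by ring,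
      show c / (2 * (1-α)) = c * ((1:ℝ)/2) / (1-α) by field_simp]
    gcongr
  have h6 : 0 ≤ ∫ t in (1/2:ℝ)..(1:ℝ), t ^ (-α) * (1-t) ^ (-β) :=
    intg_nonneg (by norm_num) (by norm_num) le_rfl
  have h7 : c / (2 * (1-α)) ≤ ∫ t in (0:ℝ)..(1/2:ℝ), t ^ (-α) * (1-t) ^ (-β) :=
    h5.trans (h3.symm.le.trans h2)
  linarith [hsplit.le, hsplit.ge]

lemma intg_one_sub {β a b : ℝ} (hβ : β < 1) (ha : a ∈ Icc (0:ℝ) 1) (hb : b ∈ Icc (0:ℝ) 1) :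
    IntervalIntegrable (fun t : ℝ => (1-t) ^ (-β)) volume a b := by
  have h1 : IntervalIntegrable (fun s : ℝ => s ^ (-β)) volume (1-a) (1-b) :=
    intervalIntegrable_rpow' (by linarith)
  have := h1.comp_sub_left 1
  simpa using this

lemma tail_ub {α β ε : ℝ} (hε0 : 0 < ε) (hε1 : ε < 1) (hα0 : 0 < α) (hα : α < 1) (hβ : β < 1) :
    (∫ t in ε..(1:ℝ), t ^ (-α) * (1-t) ^ (-β)) ≤ ε⁻¹ / (1-β) := by
  have hεm : ε ∈ Icc (0:ℝ) 1 := ⟨hε0.le, hε1.le⟩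
  have h1m : (1:ℝ) ∈ Icc (0:ℝ) 1 := ⟨zero_le_one, le_rfl⟩
  have hint2 : IntervalIntegrable (fun t : ℝ => ε ^ (-α) * (1-t) ^ (-β)) volume ε 1 :=
    (intg_one_sub hβ hεm h1m).const_mul _
  have h1 : (∫ t in ε..(1:ℝ), t ^ (-α) * (1-t) ^ (-β)) ≤
      ∫ t in ε..(1:ℝ), ε ^ (-α) * (1-t) ^ (-β) := by
    refine intervalIntegral.integral_mono_on hε1.le (intg_sub_s12 hα hβ hεm h1m) hint2
      (fun t ht => ?_)
    refine mul_le_mul_of_nonneg_right ?_ (Real.rpow_nonneg (by linarith [ht.2]) _)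
    exact Real.rpow_le_rpow_of_nonpos hε0 ht.1 (by linarith)
  have h2 : (∫ t in ε..(1:ℝ), (1-t) ^ (-β)) = (1-ε) ^ (1-β) / (1-β) := by
    have := intervalIntegral.integral_comp_sub_left (fun s : ℝ => s ^ (-β)) 1 (a := ε) (b := 1)
    rw [this]
    rw [show (1:ℝ)-1 = 0 by norm_num, integral_rpow (Or.inl (by linarith)),
      Real.zero_rpow (by linarith), sub_zero]
    ring_nf
  have h3 : ε ^ (-α) ≤ ε⁻¹ := by
    have := Real.rpow_le_rpow_of_exponent_ge hε0 hε1.le (show (-1:ℝ) ≤ -α by linarith)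
    rwa [Real.rpow_neg_one] at this
  have h4 : (1-ε) ^ ((1:ℝ)-β) ≤ 1 :=
    Real.rpow_le_one (by linarith) (by linarith) (by linarith)
  calc (∫ t in ε..(1:ℝ), t ^ (-α) * (1-t) ^ (-β))
      ≤ ∫ t in ε..(1:ℝ), ε ^ (-α) * (1-t) ^ (-β) := h1
    _ = ε ^ (-α) * ((1-ε) ^ ((1:ℝ)-β) / (1-β)) := by
        rw [intervalIntegral.integral_const_mul, h2]
    _ ≤ ε⁻¹ * (1 / (1-β)) := by
        refine mul_le_mul h3 ?_ (div_nonneg (Real.rpow_nonneg (by linarith) _) (by linarith)) (by positivity)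
        exact (div_le_div_iff_of_pos_right (by linarith)).mpr h4
    _ = ε⁻¹ / (1-β) := by ring

set_option maxHeartbeats 1000000 in
lemma hab_anti {α β x y : ℝ} (hα : α < 1) (hβ : β < 1) (hx : x ∈ Icc (0:ℝ) 1)
    (hy : y ∈ Icc (0:ℝ) 1) (hxy : x ≤ y) : hab α β y ≤ hab α β x := by
  unfold hab
  have hden := den_pos hα hβ
  rw [div_le_div_iff_of_pos_right hden]
  have hsplit : (∫ t in (0:ℝ)..(1-x), t ^ (-α) * (1-t) ^ (-β)) =
      (∫ t in (0:ℝ)..(1-y), t ^ (-α) * (1-t) ^ (-β)) +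
      ∫ t in (1-y)..(1-x), t ^ (-α) * (1-t) ^ (-β) :=
    (intervalIntegral.integral_add_adjacent_intervals
      (intg_sub_s12 hα hβ ⟨le_rfl, zero_le_one⟩ ⟨by linarith [hy.2], by linarith [hy.1]⟩)
      (intg_sub_s12 hα hβ ⟨by linarith [hy.2], by linarith [hy.1]⟩
        ⟨by linarith [hx.2], by linarith [hx.1]⟩)).symm
  have hnn : 0 ≤ ∫ t in (1-y)..(1-x), t ^ (-α) * (1-t) ^ (-β) :=
    intg_nonneg (by linarith) (by linarith [hy.2]) (by linarith [hx.1])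
  linarith [hsplit.le, hsplit.ge]

lemma hab_lb {α β ε : ℝ} (hε0 : 0 < ε) (hε1 : ε < 1) (hα0 : 0 < α) (hα : α < 1) (hβ : β < 1) :
    1 - (ε⁻¹ / (1-β)) * (2 * (1-α)) / min 1 (2 ^ β) ≤ hab α β (1-ε) := by
  set den := ∫ t in (0:ℝ)..(1:ℝ), t ^ (-α) * (1-t) ^ (-β) with hden
  set tl := ∫ t in ε..(1:ℝ), t ^ (-α) * (1-t) ^ (-β) with htl
  have hdpos := den_pos hα hβ
  have hc0 : (0:ℝ) < min 1 (2 ^ β) := lt_min one_pos (Real.rpow_pos_of_pos two_pos _)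
  have hKnn : (0:ℝ) ≤ ε⁻¹ / (1-β) := div_nonneg (by positivity) (by linarith)
  have hsplit : den = (∫ t in (0:ℝ)..ε, t ^ (-α) * (1-t) ^ (-β)) + tl :=
    (intervalIntegral.integral_add_adjacent_intervals
      (intg_sub_s12 hα hβ ⟨le_rfl, zero_le_one⟩ ⟨hε0.le, hε1.le⟩)
      (intg_sub_s12 hα hβ ⟨hε0.le, hε1.le⟩ ⟨zero_le_one, le_rfl⟩)).symm
  have hnum : hab α β (1-ε) = (den - tl) / den := by
    unfold hab
    rw [show (1:ℝ) - (1-ε) = ε by ring, ← hden]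
    congr 1
    linarith [hsplit]
  rw [hnum]
  have hdlb := den_lb hα0 hα hβ
  have htub := tail_ub hε0 hε1 hα0 hα hβ
  have h1 : tl / den ≤ (ε⁻¹ / (1-β)) / (min 1 (2 ^ β) / (2 * (1-α))) := by
    refine div_le_div₀ hKnn htub (div_pos hc0 (by linarith)) hdlb
  have h2 : (ε⁻¹ / (1-β)) / (min 1 (2 ^ β) / (2 * (1-α))) =
      (ε⁻¹ / (1-β)) * (2 * (1-α)) / min 1 (2 ^ β) := by
    rw [div_div_eq_mul_div, div_mul_eq_mul_div]
  rw [sub_div, div_self (ne_of_gt hdpos)]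
  linarith [h1.trans_eq h2]

lemma hab_symm {α β x : ℝ} (hα : α < 1) (hβ : β < 1) (hx : x ∈ Icc (0:ℝ) 1) :
    hab α β x = 1 - hab β α (1-x) := by
  have hdg := den_pos hβ hα
  have hden_sym : (∫ t in (0:ℝ)..(1:ℝ), t ^ (-α) * (1-t) ^ (-β)) =
      ∫ t in (0:ℝ)..(1:ℝ), t ^ (-β) * (1-t) ^ (-α) := by
    have h := intervalIntegral.integral_comp_sub_left
      (fun s : ℝ => s ^ (-β) * (1-s) ^ (-α)) 1 (a := 0) (b := 1)
    simp only [sub_sub_cancel, sub_zero, sub_self] at h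
    rw [← h]
    exact intervalIntegral.integral_congr (fun t _ => by ring)
  have hnum : (∫ t in (0:ℝ)..(1-x), t ^ (-α) * (1-t) ^ (-β)) =
      ∫ t in x..(1:ℝ), t ^ (-β) * (1-t) ^ (-α) := by
    have h := intervalIntegral.integral_comp_sub_left
      (fun s : ℝ => s ^ (-α) * (1-s) ^ (-β)) 1 (a := x) (b := 1)
    simp only [sub_sub_cancel, sub_zero, sub_self] at h
    rw [← h]
    exact intervalIntegral.integral_congr (fun t _ => by ring)
  have hsplit : (∫ t in (0:ℝ)..(1:ℝ), t ^ (-β) * (1-t) ^ (-α)) =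
      (∫ t in (0:ℝ)..x, t ^ (-β) * (1-t) ^ (-α)) +
      ∫ t in x..(1:ℝ), t ^ (-β) * (1-t) ^ (-α) := by
    refine (intervalIntegral.integral_add_adjacent_intervals ?_ ?_).symm
    · exact intg_sub_s12 hβ hα ⟨le_rfl, zero_le_one⟩ hx
    · exact intg_sub_s12 hβ hα hx ⟨zero_le_one, le_rfl⟩
  unfold hab
  rw [hnum, hden_sym, show (1:ℝ) - (1-x) = x by ring]
  have h5 : (∫ t in x..(1:ℝ), t ^ (-β) * (1-t) ^ (-α)) =
      (∫ t in (0:ℝ)..(1:ℝ), t ^ (-β) * (1-t) ^ (-α)) -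
      ∫ t in (0:ℝ)..x, t ^ (-β) * (1-t) ^ (-α) := by linarith [hsplit]
  rw [h5, sub_div, div_self hdg.ne']

lemma part1 (β : ℝ) (hβ : β < 1) (P : ℝ → ℝ)
    (hP : ∀ α < (1:ℝ), P α ∈ Set.Icc (0:ℝ) 1 ∧ hab α β (P α) = P α) :
    Filter.Tendsto P (nhdsWithin 1 (Set.Iio 1)) (nhds 1) := by
  rw [Metric.tendsto_nhdsWithin_nhds]
  intro ε hε
  set ε₀ : ℝ := min (ε/2) (1/2) with hε₀def
  have hε₀0 : 0 < ε₀ := lt_min (by linarith) (by norm_num)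
  have hε₀1 : ε₀ < 1 := lt_of_le_of_lt (min_le_right _ _) (by norm_num)
  have hε₀ε : ε₀ < ε := lt_of_le_of_lt (min_le_left _ _) (by linarith)
  set c : ℝ := min 1 (2 ^ β) with hcdef
  have hc0 : 0 < c := lt_min one_pos (Real.rpow_pos_of_pos two_pos _)
  set K : ℝ := ε₀⁻¹ / (1-β) with hKdef
  have hK0 : 0 < K := div_pos (by positivity) (by linarith)
  refine ⟨min 1 (ε₀ * c / (2*K)), lt_min one_pos (by positivity), ?_⟩
  intro α hαIio hdist
  have hα1 : α < 1 := hαIio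
  rw [Real.dist_eq, abs_of_neg (by linarith : α - 1 < 0)] at hdist
  have h1α : 1 - α < min 1 (ε₀ * c / (2*K)) := by linarith [hdist]
  have hα0 : 0 < α := by
    have := lt_of_lt_of_le h1α (min_le_left _ _); linarith
  obtain ⟨hPm, hPf⟩ := hP α hα1
  have hkey : 1 - ε₀ < hab α β (1-ε₀) := by
    have hlb := hab_lb hε₀0 hε₀1 hα0 hα1 hβ
    rw [← hKdef, ← hcdef] at hlb
    have h2 : 1 - α < ε₀ * c / (2*K) := lt_of_lt_of_le h1α (min_le_right _ _)
    have hlt : K * (2*(1-α)) / c < ε₀ := by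
      rw [div_lt_iff₀ hc0]
      have h3 : K * (2*(1-α)) < K * (2*(ε₀ * c / (2*K))) := by
        apply mul_lt_mul_of_pos_left _ hK0
        linarith
      have h4 : K * (2*(ε₀ * c / (2*K))) = ε₀ * c := by field_simp
      linarith
    linarith
  have hPgt : 1 - ε₀ < P α := by
    by_contra h
    push_neg at h
    have hanti := hab_anti hα1 hβ hPm ⟨by linarith, by linarith⟩ h
    rw [hPf] at hanti
    linarith
  rw [Real.dist_eq, abs_of_nonpos (by linarith [hPm.2] : P α - 1 ≤ 0)]
  linarith

/-- For fixed `β < 1`, the fixed point `p(α,β)` of `h_{(α,β)}` tends to `1` as `α → 1⁻`;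
symmetrically, for fixed `α < 1`, `p(α,β) → 0` as `β → 1⁻`. -/
theorem stmt_12 :
    (∀ β : ℝ, β < 1 → ∀ P : ℝ → ℝ,
      (∀ α < (1:ℝ), P α ∈ Set.Icc (0:ℝ) 1 ∧ hab α β (P α) = P α) →
      Filter.Tendsto P (nhdsWithin 1 (Set.Iio 1)) (nhds 1)) ∧
    (∀ α : ℝ, α < 1 → ∀ Q : ℝ → ℝ,
      (∀ β < (1:ℝ), Q β ∈ Set.Icc (0:ℝ) 1 ∧ hab α β (Q β) = Q β) →
      Filter.Tendsto Q (nhdsWithin 1 (Set.Iio 1)) (nhds 0)) := by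
  constructor
  · exact part1
  · intro α hα Q hQ
    have h1 : ∀ b < (1:ℝ), (1 - Q b) ∈ Icc (0:ℝ) 1 ∧ hab b α (1 - Q b) = 1 - Q b := by
      intro b hb
      obtain ⟨hm, hf⟩ := hQ b hb
      refine ⟨⟨by linarith [hm.2], by linarith [hm.1]⟩, ?_⟩
      have hs := hab_symm (α := b) (β := α) (x := 1 - Q b) hb hα
        ⟨by linarith [hm.2], by linarith [hm.1]⟩
      rw [hs, show (1:ℝ) - (1 - Q b) = Q b by ring, hf]
    have h2 := part1 α hα (fun b => 1 - Q b) h1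
    have h3 : Tendsto (fun b => 1 - (1 - Q b)) (nhdsWithin 1 (Iio 1)) (nhds (1-1)) :=
      Tendsto.const_sub 1 h2
    simpa using h3
end
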